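/- Define s₀, s₁ : [0,1] → [0,1] by s₀(x) = 1 − √(1−x) and s₁(x) = √x, and for ω ∈ Ω and n ≥ 1 let ψ_{ω_n} := s_{ω(n)} ∘ ⋯ ∘ s_{ω(1)}. Then for every z ∈ (0,1), the law of the random variable ω ↦ ψ_{ω_n}(z) under μ converges weakly, as n → ∞, to the uniform distribution on [0,1]. -/

import Mathlib

open MeasureTheory Filter Topology

/-- `s₀(x) = 1 - √(1-x)` and `s₁(x) = √x`, the inverses of the BEC polar maps
`t₀(x) = 2x - x²` and `t₁(x) = x²`. -/
noncomputable def becS (b : Bool) (x : ℝ) : ℝ :=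
  if b then Real.sqrt x else 1 - Real.sqrt (1 - x)

/-- `psi z n ω = ψ_{ω_n}(z) = s_{ω(n)} ∘ ⋯ ∘ s_{ω(1)} (z)`. -/
noncomputable def psi (z : ℝ) : ℕ → (ℕ → Bool) → ℝ
  | 0, _ => z
  | n + 1, ω => becS (ω n) (psi z n ω)

/-- `μ` is the i.i.d. Bernoulli(1/2) product measure on `{0,1}^ℕ`,
characterized by its values on cylinder sets. -/
def IsBernoulliHalf (μ : Measure (ℕ → Bool)) : Prop :=
  ∀ (n : ℕ) (b : Fin n → Bool), μ {ω | ∀ i : Fin n, ω i = b i} = (2 : ENNReal)⁻¹ ^ n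

/-!
Since `s_b` is the increasing inverse of `t_b` on `[0, 1]`, the distribution function
`Fₙ(u) = μ(ψₙ(z) ≤ u)` satisfies `Fₙ₊₁(u) = (Fₙ(t₀ u) + Fₙ(t₁ u)) / 2`, i.e. `Fₙ = Qⁿ F₀` for
the averaging operator `Q`, with `F₀ = 1_{[z, ∞)}`. The operator `Q` is positive, fixes constants
and the identity, and `Q(x²) = x² + (x (1 - x))²`; hence the sums `∑ₖ Qᵏ((x (1 - x))²)(u)`
telescope to at most `1`, so `Qⁿ((x (1 - x))²) → 0` pointwise. As `|F₀(x) - x| ≤ C x (1 - x)`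
on `[0, 1]`, this forces `Fₙ(u) → u`, and convergence of distribution functions everywhere
gives weak convergence (portmanteau, on the π-system of half-open intervals).
-/

open Set

def becT (b : Bool) (u : ℝ) : ℝ := if b then u ^ 2 else 2 * u - u ^ 2

@[simp] lemma becT_false (u : ℝ) : becT false u = 2 * u - u ^ 2 := rfl

@[simp] lemma becT_true (u : ℝ) : becT true u = u ^ 2 := rfl

lemma becT_mem_Icc (b : Bool) {u : ℝ} (hu : u ∈ Icc (0 : ℝ) 1) : becT b u ∈ Icc (0 : ℝ) 1 := by
  obtain ⟨h0, h1⟩ := hu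
  cases b <;> simp only [becT_false, becT_true, mem_Icc] <;> constructor <;> nlinarith

lemma becS_mem_Icc (b : Bool) {x : ℝ} (hx : x ∈ Icc (0 : ℝ) 1) : becS b x ∈ Icc (0 : ℝ) 1 := by
  obtain ⟨h0, h1⟩ := hx
  cases b <;> simp only [becS, Bool.false_eq_true, if_false, if_true, mem_Icc]
  · exact ⟨sub_nonneg.2 (Real.sqrt_le_one.2 (by linarith)),
      sub_le_self _ (Real.sqrt_nonneg _)⟩
  · exact ⟨Real.sqrt_nonneg _, Real.sqrt_le_one.2 h1⟩

lemma becS_le_iff (b : Bool) {x u : ℝ} (hx : x ∈ Icc (0 : ℝ) 1) (hu : u ∈ Icc (0 : ℝ) 1) :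
    becS b x ≤ u ↔ x ≤ becT b u := by
  obtain ⟨hx0, hx1⟩ := hx
  obtain ⟨hu0, hu1⟩ := hu
  cases b <;> simp only [becS, becT_false, becT_true, Bool.false_eq_true, if_false, if_true]
  · rw [sub_le_comm, Real.le_sqrt (by linarith) (by linarith)]
    constructor <;> intro h <;> nlinarith
  · exact Real.sqrt_le_left hu0

noncomputable def polarAvg : Module.End ℝ (ℝ → ℝ) where
  toFun φ u := (φ (becT false u) + φ (becT true u)) / 2
  map_add' φ ψ := by ext u; simp only [Pi.add_apply]; ring
  map_smul' c φ := by ext u; simp only [Pi.smul_apply, smul_eq_mul, RingHom.id_apply]; ring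

lemma polarAvg_apply (φ : ℝ → ℝ) (u : ℝ) :
    polarAvg φ u = (φ (becT false u) + φ (becT true u)) / 2 := rfl

lemma polarAvg_pow_apply_nonneg {φ : ℝ → ℝ} (hφ : ∀ x ∈ Icc (0 : ℝ) 1, 0 ≤ φ x) (n : ℕ)
    {u : ℝ} (hu : u ∈ Icc (0 : ℝ) 1) : 0 ≤ (polarAvg ^ n) φ u := by
  induction n generalizing φ with
  | zero => exact hφ u hu
  | succ n ih =>
    rw [pow_succ, Module.End.mul_apply]
    refine ih fun x hx => ?_
    rw [polarAvg_apply]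
    have := hφ _ (becT_mem_Icc false hx)
    have := hφ _ (becT_mem_Icc true hx)
    positivity

lemma polarAvg_pow_apply_mono {φ ψ : ℝ → ℝ} (h : ∀ x ∈ Icc (0 : ℝ) 1, φ x ≤ ψ x) (n : ℕ)
    {u : ℝ} (hu : u ∈ Icc (0 : ℝ) 1) : (polarAvg ^ n) φ u ≤ (polarAvg ^ n) ψ u := by
  have := polarAvg_pow_apply_nonneg (φ := ψ - φ) (fun x hx => sub_nonneg.2 (h x hx)) n hu
  rwa [map_sub, Pi.sub_apply, sub_nonneg] at this

lemma abs_polarAvg_pow_apply_le (φ : ℝ → ℝ) (n : ℕ) {u : ℝ} (hu : u ∈ Icc (0 : ℝ) 1) :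
    |(polarAvg ^ n) φ u| ≤ (polarAvg ^ n) (fun x => |φ x|) u := by
  refine abs_le.2 ⟨?_, polarAvg_pow_apply_mono (fun x _ => le_abs_self (φ x)) n hu⟩
  rw [← neg_le_neg_iff, neg_neg, ← Pi.neg_apply, ← map_neg]
  exact polarAvg_pow_apply_mono (fun x _ => neg_le_abs (φ x)) n hu

lemma polarAvg_pow_eq_self {φ : ℝ → ℝ} (h : polarAvg φ = φ) (n : ℕ) : (polarAvg ^ n) φ = φ := by
  rw [Module.End.pow_apply, Function.iterate_fixed h]

lemma polarAvg_const (c : ℝ) : polarAvg (fun _ => c) = fun _ => c := by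
  ext u; simp only [polarAvg_apply]; ring

lemma polarAvg_id : polarAvg id = id := by
  ext u; simp only [polarAvg_apply, becT_false, becT_true, id]; ring

lemma polarAvg_sq :
    polarAvg (fun x => x ^ 2) = (fun x => x ^ 2) + fun x => (x * (1 - x)) ^ 2 := by
  ext u; simp only [polarAvg_apply, becT_false, becT_true, Pi.add_apply]; ring

lemma tendsto_polarAvg_pow_apply_sq_mul_sq {u : ℝ} (hu : u ∈ Icc (0 : ℝ) 1) :
    Tendsto (fun n => (polarAvg ^ n) (fun x => (x * (1 - x)) ^ 2) u) atTop (𝓝 0) := by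
  have hstep (k : ℕ) : (polarAvg ^ k) (fun x => (x * (1 - x)) ^ 2)
      = (polarAvg ^ (k + 1)) (fun x => x ^ 2) - (polarAvg ^ k) (fun x => x ^ 2) := by
    rw [pow_succ, Module.End.mul_apply, polarAvg_sq, map_add, add_sub_cancel_left]
  have hsq_le (n : ℕ) : (polarAvg ^ n) (fun x => x ^ 2) u ≤ 1 := by
    have := polarAvg_pow_apply_mono (φ := fun x => x ^ 2) (ψ := fun _ => 1)
      (fun x hx => pow_le_one₀ hx.1 hx.2) n hu
    rwa [polarAvg_pow_eq_self (polarAvg_const 1)] at this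
  -- the partial sums telescope to `Qⁿ(x²)(u) - u² ≤ 1`
  refine Summable.tendsto_atTop_zero <| summable_of_sum_range_le (c := 1)
    (fun k => polarAvg_pow_apply_nonneg (fun x _ => sq_nonneg _) k hu) fun n => ?_
  simp_rw [hstep, Pi.sub_apply]
  rw [Finset.sum_range_sub (fun k => (polarAvg ^ k) (fun x => x ^ 2) u)]
  simp only [pow_zero, Module.End.one_apply]
  nlinarith [hsq_le n, sq_nonneg u]

lemma tendsto_polarAvg_pow_apply_of_abs_le {g : ℝ → ℝ} {K : ℝ}
    (hg : ∀ x ∈ Icc (0 : ℝ) 1, |g x| ≤ K * (x * (1 - x))) {u : ℝ} (hu : u ∈ Icc (0 : ℝ) 1) :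
    Tendsto (fun n => (polarAvg ^ n) g u) atTop (𝓝 0) := by
  rw [Metric.tendsto_nhds]
  intro ε hε
  set θ := ε / 2
  have hθ : 0 < θ := half_pos hε
  -- trades the factor `x (1 - x)` for its square, at the price of an additive `θ`
  have hamgm (a : ℝ) : a ≤ θ + a ^ 2 / θ := by
    rw [← sub_nonneg, show θ + a ^ 2 / θ - a = ((a - θ / 2) ^ 2 + 3 / 4 * θ ^ 2) / θ by
      field_simp; ring]
    positivity
  have hbound (n : ℕ) : |(polarAvg ^ n) g u|
      ≤ θ + K ^ 2 / θ * (polarAvg ^ n) (fun x => (x * (1 - x)) ^ 2) u := by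
    refine (abs_polarAvg_pow_apply_le g n hu).trans ?_
    have := polarAvg_pow_apply_mono (φ := fun x => |g x|)
      (ψ := (fun _ => θ) + (K ^ 2 / θ) • fun x => (x * (1 - x)) ^ 2) (fun x hx => ?_) n hu
    · rwa [map_add, map_smul, polarAvg_pow_eq_self (polarAvg_const θ)] at this
    · simp only [Pi.add_apply, Pi.smul_apply, smul_eq_mul]
      refine (hg x hx).trans ?_
      rw [div_mul_eq_mul_div, ← mul_pow]
      exact hamgm _
  have hlim := (tendsto_polarAvg_pow_apply_sq_mul_sq hu).const_mul (K ^ 2 / θ) |>.const_add θ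
  rw [mul_zero, add_zero] at hlim
  filter_upwards [hlim.eventually (gt_mem_nhds (half_lt_self hε))] with n hn
  rw [Real.dist_eq, sub_zero]
  exact (hbound n).trans_lt hn

lemma abs_ite_le_sub_self_le {z x : ℝ} (hz : z ∈ Ioo (0 : ℝ) 1) (hx : x ∈ Icc (0 : ℝ) 1) :
    |(if z ≤ x then 1 else 0) - x| ≤ (min z (1 - z))⁻¹ * (x * (1 - x)) := by
  obtain ⟨hz0, hz1⟩ := hz
  obtain ⟨hx0, hx1⟩ := hx
  have hm : 0 < min z (1 - z) := lt_min hz0 (by linarith)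
  have hmz := min_le_left z (1 - z)
  have hmz' := min_le_right z (1 - z)
  rw [inv_mul_eq_div, le_div_iff₀ hm]
  split_ifs with hzx
  · rw [abs_of_nonneg (by linarith)]; nlinarith
  · rw [abs_of_nonpos (by linarith)]; nlinarith

lemma tendsto_polarAvg_pow_apply_ite_le {z u : ℝ} (hz : z ∈ Ioo (0 : ℝ) 1)
    (hu : u ∈ Icc (0 : ℝ) 1) :
    Tendsto (fun n => (polarAvg ^ n) (fun x => if z ≤ x then 1 else 0) u) atTop (𝓝 u) := by
  have := tendsto_polarAvg_pow_apply_of_abs_le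
    (g := (fun x => if z ≤ x then 1 else 0) - id) (fun x hx => abs_ite_le_sub_self_le hz hx) hu
  simp only [map_sub, Pi.sub_apply, polarAvg_pow_eq_self polarAvg_id, id] at this
  simpa using this.add_const u

noncomputable def psiFin (z : ℝ) : (n : ℕ) → (Fin n → Bool) → ℝ
  | 0, _ => z
  | n + 1, b => becS (b (Fin.last n)) (psiFin z n (Fin.init b))

lemma psi_eq_psiFin (z : ℝ) (n : ℕ) (ω : ℕ → Bool) : psi z n ω = psiFin z n fun i => ω i := by
  induction n with
  | zero => rfl
  | succ n ih => rw [psi, ih]; rfl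

lemma psiFin_mem_Icc {z : ℝ} (hz : z ∈ Icc (0 : ℝ) 1) (n : ℕ) (b : Fin n → Bool) :
    psiFin z n b ∈ Icc (0 : ℝ) 1 := by
  induction n with
  | zero => exact hz
  | succ n ih => exact becS_mem_Icc _ (ih _)

@[simp] lemma psiFin_snoc (z : ℝ) (n : ℕ) (b : Fin n → Bool) (c : Bool) :
    psiFin z (n + 1) (Fin.snoc b c) = becS c (psiFin z n b) := by
  simp [psiFin]

noncomputable def cdfPsi (z : ℝ) (n : ℕ) (u : ℝ) : ℝ :=
  ((Finset.univ.filter fun b : Fin n → Bool => psiFin z n b ≤ u).card : ℝ) / 2 ^ n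

lemma cdfPsi_succ {z u : ℝ} (hz : z ∈ Icc (0 : ℝ) 1) (n : ℕ) (hu : u ∈ Icc (0 : ℝ) 1) :
    cdfPsi z (n + 1) u = polarAvg (cdfPsi z n) u := by
  have hcard : (Finset.univ.filter fun b : Fin (n + 1) → Bool => psiFin z (n + 1) b ≤ u).card
      = (Finset.univ.filter fun b : Fin n → Bool => psiFin z n b ≤ becT false u).card
        + (Finset.univ.filter fun b : Fin n → Bool => psiFin z n b ≤ becT true u).card := by
    simp only [Finset.card_filter]
    rw [← (Fin.snocEquiv fun _ => Bool).sum_comp, Fintype.sum_prod_type, Fintype.sum_bool]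
    simp only [Fin.snocEquiv, Equiv.coe_fn_mk, psiFin_snoc,
      becS_le_iff _ (psiFin_mem_Icc hz n _) hu]
    ring
  rw [cdfPsi, hcard, polarAvg_apply, cdfPsi, cdfPsi]
  push_cast
  field_simp
  ring

lemma cdfPsi_eq_polarAvg_pow {z u : ℝ} (hz : z ∈ Icc (0 : ℝ) 1) (n : ℕ)
    (hu : u ∈ Icc (0 : ℝ) 1) :
    cdfPsi z n u = (polarAvg ^ n) (fun x => if z ≤ x then 1 else 0) u := by
  induction n generalizing u with
  | zero =>
    rw [pow_zero, Module.End.one_apply]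
    split_ifs with h <;> simp [cdfPsi, psiFin, h]
  | succ n ih =>
    rw [cdfPsi_succ hz n hu, pow_succ', Module.End.mul_apply, polarAvg_apply, polarAvg_apply,
      ih (becT_mem_Icc false hu), ih (becT_mem_Icc true hu)]

lemma IsBernoulliHalf.measureReal_prefix_mem {μ : Measure (ℕ → Bool)} (hμ : IsBernoulliHalf μ)
    (n : ℕ) (T : Finset (Fin n → Bool)) :
    μ.real {ω | (fun i : Fin n => ω i) ∈ T} = T.card / 2 ^ n := by
  have hmeas : Measurable fun (ω : ℕ → Bool) (i : Fin n) => ω i :=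
    measurable_pi_lambda _ fun i => measurable_pi_apply _
  have hcyl (b : Fin n → Bool) : μ ((fun ω (i : Fin n) => ω i) ⁻¹' {b}) = 2⁻¹ ^ n := by
    rw [← hμ n b]
    congr 1
    ext ω
    simp [funext_iff]
  rw [measureReal_def, ← Set.preimage_ofPred_eq, Finset.setOfPred_mem,
    ← sum_measure_preimage_singleton T fun b _ => hmeas (measurableSet_singleton b)]
  simp [hcyl, div_eq_mul_inv]

lemma measurable_psi (z : ℝ) (n : ℕ) : Measurable (psi z n) := by
  rw [show psi z n = psiFin z n ∘ fun ω (i : Fin n) => ω i from funext (psi_eq_psiFin z n)]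
  exact (measurable_of_countable _).comp (measurable_pi_lambda _ fun i => measurable_pi_apply _)

lemma IsBernoulliHalf.measureReal_psi_preimage_Iic {μ : Measure (ℕ → Bool)}
    (hμ : IsBernoulliHalf μ) (z : ℝ) (n : ℕ) (u : ℝ) : μ.real (psi z n ⁻¹' Iic u) = cdfPsi z n u := by
  rw [cdfPsi, ← hμ.measureReal_prefix_mem]
  congr 1
  ext ω
  simp [psi_eq_psiFin]

lemma tendsto_cdfPsi {z : ℝ} (hz : z ∈ Ioo (0 : ℝ) 1) (u : ℝ) :
    Tendsto (fun n => cdfPsi z n u) atTop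
      (𝓝 ((volume.restrict (Icc (0 : ℝ) 1)).real (Iic u))) := by
  have hz' := Ioo_subset_Icc_self hz
  have hinter : Iic u ∩ Icc 0 1 = Icc 0 (min u 1) := by
    ext x
    simp only [mem_inter_iff, mem_Iic, mem_Icc, le_min_iff]
    tauto
  rw [measureReal_restrict_apply measurableSet_Iic, hinter, Real.volume_real_Icc, sub_zero]
  rcases lt_or_ge u 0 with hu0 | hu0
  · have hcdf (n : ℕ) : cdfPsi z n u = 0 := by
      simp only [cdfPsi, div_eq_zero_iff, Nat.cast_eq_zero, Finset.card_eq_zero,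
        Finset.filter_eq_empty_iff]
      exact Or.inl fun b _ => not_le.2 (hu0.trans_le (psiFin_mem_Icc hz' n b).1)
    simp [hcdf, hu0.le]
  rcases le_or_gt u 1 with hu1 | hu1
  · rw [min_eq_left hu1, max_eq_left hu0]
    simp_rw [cdfPsi_eq_polarAvg_pow hz' _ ⟨hu0, hu1⟩]
    exact tendsto_polarAvg_pow_apply_ite_le hz ⟨hu0, hu1⟩
  · have hcdf (n : ℕ) : cdfPsi z n u = 1 := by
      rw [cdfPsi, Finset.filter_true_of_mem fun b _ => (psiFin_mem_Icc hz' n b).2.trans hu1.le]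
      simp
    simp [hcdf, hu1.le]

lemma ProbabilityMeasure.tendsto_of_forall_tendsto_measureReal_Iic {ι : Type*} {l : Filter ι}
    [l.IsCountablyGenerated] {μs : ι → ProbabilityMeasure ℝ} {μ : ProbabilityMeasure ℝ}
    (h : ∀ u, Tendsto (fun i => (μs i : Measure ℝ).real (Iic u)) l
      (𝓝 ((μ : Measure ℝ).real (Iic u)))) :
    Tendsto μs l (𝓝 μ) := by
  have hIoc (ν : Measure ℝ) [IsFiniteMeasure ν] {a b : ℝ} (hab : a < b) :
      ν.real (Ioc a b) = ν.real (Iic b) - ν.real (Iic a) := by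
    rw [← measureReal_sdiff (Iic_subset_Iic.2 hab.le) measurableSet_Iic]
    congr 1
    ext x
    simp [and_comm]
  refine (isPiSystem_Ioc (id : ℝ → ℝ) id).tendsto_probabilityMeasure_of_tendsto_of_mem
    (by rintro _ ⟨a, b, -, rfl⟩; exact measurableSet_Ioc) (fun s hs x hx => ?_) ?_
  · obtain ⟨ε, hε, hball⟩ := Metric.isOpen_iff.1 hs x hx
    refine ⟨Ioc (x - ε) (x + ε / 2), ⟨x - ε, x + ε / 2, by simp; linarith, rfl⟩,
      Ioc_mem_nhds (by linarith) (by linarith), fun y hy => hball ?_⟩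
    rw [Real.ball_eq_Ioo]
    exact ⟨hy.1, by linarith [hy.2]⟩
  · rintro _ ⟨a, b, hab : a < b, rfl⟩
    rw [← NNReal.tendsto_coe]
    simp only [← ProbabilityMeasure.measureReal_eq_coe_coeFn, id]
    rw [funext fun i => hIoc (μs i : Measure ℝ) hab, hIoc (μ : Measure ℝ) hab]
    exact (h b).sub (h a)

/-- Weak convergence of the law of `ψ_{ω_n}(z)` to the uniform distribution on `[0,1]`,
expressed via convergence of integrals of bounded continuous functions. -/
theorem stmt11 (μ : Measure (ℕ → Bool)) [IsProbabilityMeasure μ] (hμ : IsBernoulliHalf μ)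
    (z : ℝ) (hz : z ∈ Set.Ioo (0:ℝ) 1) :
    ∀ f : BoundedContinuousFunction ℝ ℝ,
      Tendsto (fun n : ℕ => ∫ ω, f (psi z n ω) ∂μ) atTop
        (nhds (∫ x in Set.Icc (0:ℝ) 1, f x)) := by
  intro f
  let law (n : ℕ) : ProbabilityMeasure ℝ :=
    ⟨μ.map (psi z n), Measure.isProbabilityMeasure_map (measurable_psi z n).aemeasurable⟩
  let uniform : ProbabilityMeasure ℝ :=
    ⟨volume.restrict (Icc 0 1), ⟨by simp [Real.volume_Icc]⟩⟩
  have hlaw : Tendsto law atTop (𝓝 uniform) :=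
    ProbabilityMeasure.tendsto_of_forall_tendsto_measureReal_Iic fun u => by
      simpa [law, uniform, map_measureReal_apply (measurable_psi z _) measurableSet_Iic,
        hμ.measureReal_psi_preimage_Iic] using tendsto_cdfPsi hz u
  simpa [law, uniform, integral_map (measurable_psi z _).aemeasurable
    f.continuous.aestronglyMeasurable] using
    ProbabilityMeasure.tendsto_iff_forall_integral_tendsto.1 hlaw f
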